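/- Let N be a positive integer and let x:{0,…,N−1}→ℍ be a quaternion-valued sequence that is not identically zero, with discrete quaternion Fourier transform x̂(v)=(1/√N) ∑_{s=0}^{N−1} x(s)·exp(−2π j v s/N). Then (number of s with x(s)≠0) · (number of v with x̂(v)≠0) ≥ N. -/

import Mathlib

open scoped BigOperators Classical

noncomputable def qJ : Quaternion ℝ := ⟨0, 0, 1, 0⟩

/-- exp(θ q) = cos θ + (sin θ) q for a (unit pure) quaternion q. -/
noncomputable def qexp (q : Quaternion ℝ) (θ : ℝ) : Quaternion ℝ :=
  ((Real.cos θ : ℝ) : Quaternion ℝ) + (Real.sin θ) • q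

/-- One-dimensional discrete quaternion Fourier transform. -/
noncomputable def dqft1 (N : ℕ) (x : Fin N → Quaternion ℝ) (v : Fin N) : Quaternion ℝ :=
  ((Real.sqrt N)⁻¹ : ℝ) •
    ∑ s : Fin N, x s * qexp qJ (-(2 * Real.pi * v.val * s.val / N))

lemma qJ_re : qJ.re = 0 := rfl
lemma qJ_imI : qJ.imI = 0 := rfl
lemma qJ_imJ : qJ.imJ = 1 := rfl
lemma qJ_imK : qJ.imK = 0 := rfl

/-- The embedding of ℂ into the quaternions sending `i` to `j`. -/
noncomputable def cqHom : ℂ →+* Quaternion ℝ where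
  toFun z := ⟨z.re, 0, z.im, 0⟩
  map_one' := by ext <;> simp <;> rfl
  map_mul' := by
    intro z w
    show (⟨(z * w).re, 0, (z * w).im, 0⟩ : Quaternion ℝ) =
      (⟨z.re, 0, z.im, 0⟩ : Quaternion ℝ) * ⟨w.re, 0, w.im, 0⟩
    ext <;> simp [Complex.mul_re, Complex.mul_im] <;> ring
  map_zero' := by ext <;> simp <;> rfl
  map_add' := by
    intro z w
    show (⟨(z + w).re, 0, (z + w).im, 0⟩ : Quaternion ℝ) =
      (⟨z.re, 0, z.im, 0⟩ : Quaternion ℝ) + ⟨w.re, 0, w.im, 0⟩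
    ext <;> simp

lemma cqHom_apply (z : ℂ) : cqHom z = ⟨z.re, 0, z.im, 0⟩ := rfl

lemma qexp_eq (θ : ℝ) : qexp qJ θ = cqHom (Complex.exp (θ * Complex.I)) := by
  have h := Complex.exp_mul_I (θ : ℂ)
  ext <;>
    simp [qexp, qJ_re, qJ_imI, qJ_imJ, qJ_imK, cqHom_apply, h, ← Complex.ofReal_cos, ← Complex.ofReal_sin]

lemma norm_qexp (θ : ℝ) : ‖qexp qJ θ‖ = 1 := by
  have h1 : Quaternion.normSq (qexp qJ θ) = 1 := by
    simp [Quaternion.normSq_def', qexp, qJ_re, qJ_imI, qJ_imJ, qJ_imK]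
  have h2 := Quaternion.normSq_eq_norm_mul_self (qexp qJ θ)
  nlinarith [norm_nonneg (qexp qJ θ)]

/-- Kernel orthogonality sum. -/
lemma kernel_sum (N : ℕ) (hN : 0 < N) (s t : Fin N) :
    ∑ v : Fin N, qexp qJ (2 * Real.pi * v.val * ((s.val : ℝ) - t.val) / N)
      = if s = t then (N : Quaternion ℝ) else 0 := by
  set m : ℝ := (s.val : ℝ) - t.val with hm
  set z : ℂ := Complex.exp ((2 * Real.pi * m / N : ℝ) * Complex.I) with hz
  have hterm : ∀ v : Fin N,
      qexp qJ (2 * Real.pi * v.val * m / N) = cqHom (z ^ (v.val : ℕ)) := by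
    intro v
    rw [qexp_eq]
    congr 1
    rw [hz, ← Complex.exp_nat_mul]
    congr 1
    push_cast
    ring
  simp only [hterm]
  rw [← map_sum]
  by_cases hst : s = t
  · subst hst
    have : m = 0 := by simp [hm]
    have hz1 : z = 1 := by simp [hz, this]
    simp [hz1, map_natCast]
  · have hz1 : z ≠ 1 := by
      intro h
      rw [hz, Complex.exp_eq_one_iff] at h
      obtain ⟨n, hn⟩ := h
      have hI : ((2 * Real.pi * m / N : ℝ) : ℂ) = ((n * (2 * Real.pi) : ℝ) : ℂ) := by
        have : ((2 * Real.pi * m / N : ℝ) : ℂ) * Complex.I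
            = ((n * (2 * Real.pi) : ℝ) : ℂ) * Complex.I := by
          rw [hn]; push_cast; ring
        exact mul_right_cancel₀ Complex.I_ne_zero this
      have hR : 2 * Real.pi * m / N = n * (2 * Real.pi) := by exact_mod_cast hI
      have hNne : (N : ℝ) ≠ 0 := Nat.cast_ne_zero.mpr hN.ne'
      have hmn : m = n * N := by
        have hπ : (2 * Real.pi) ≠ 0 := by positivity
        field_simp at hR
        nlinarith [hR, Real.pi_pos]
      -- m = s - t as integers
      have hint : (s.val : ℤ) - t.val = n * N := by
        have h' : (((s.val : ℤ) - t.val : ℤ) : ℝ) = ((n * (N : ℤ) : ℤ) : ℝ) := by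
          push_cast; push_cast [hm] at hmn; linarith
        exact_mod_cast h'
      have hs := s.isLt; have ht := t.isLt
      have hne : (s.val : ℤ) ≠ t.val := by
        exact_mod_cast fun h => hst (Fin.ext (by exact_mod_cast h))
      rcases lt_trichotomy n 0 with h | h | h
      · nlinarith [hint, (show (s.val : ℤ) ≥ 0 by positivity),
          (show (t.val : ℤ) < N by exact_mod_cast ht), h]
      · simp [h] at hint; omega
      · nlinarith [hint, (show (t.val : ℤ) ≥ 0 by positivity),
          (show (s.val : ℤ) < N by exact_mod_cast hs), h]
    have hzN : z ^ N = 1 := by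
      rw [hz, ← Complex.exp_nat_mul]
      have hNne : (N : ℂ) ≠ 0 := Nat.cast_ne_zero.mpr hN.ne'
      have hmZ : ((s.val : ℤ) - t.val : ℤ) = (m : ℝ) := by push_cast [hm]; ring
      have : (N : ℂ) * (((2 * Real.pi * m / N : ℝ) : ℂ) * Complex.I)
          = ((s.val : ℤ) - t.val : ℤ) * (2 * Real.pi * Complex.I) := by
        push_cast [hm]
        field_simp
      rw [this, Complex.exp_int_mul_two_pi_mul_I]
    have : ∑ v : Fin N, z ^ (v.val : ℕ) = 0 := by
      rw [Fin.sum_univ_eq_sum_range (fun i => z ^ i)]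
      rw [geom_sum_eq hz1, hzN]
      simp
    rw [this, if_neg hst, map_zero]

lemma qexp_mul (a b : ℝ) : qexp qJ a * qexp qJ b = qexp qJ (a + b) := by
  ext <;> simp [qexp, qJ_re, qJ_imI, qJ_imJ, qJ_imK, Quaternion.re_mul, Quaternion.imI_mul,
    Quaternion.imJ_mul, Quaternion.imK_mul, Real.cos_add, Real.sin_add] <;> ring

/-- Inversion formula for the 1D DQFT. -/
lemma inversion (N : ℕ) (hN : 0 < N) (x : Fin N → Quaternion ℝ) (s : Fin N) :
    x s = ((Real.sqrt N)⁻¹ : ℝ) •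
      ∑ v : Fin N, dqft1 N x v * qexp qJ (2 * Real.pi * v.val * s.val / N) := by
  have hNR : (0:ℝ) < N := by exact_mod_cast hN
  have hsq : Real.sqrt N * Real.sqrt N = N := Real.mul_self_sqrt hNR.le
  have hterm : ∀ v : Fin N,
      dqft1 N x v * qexp qJ (2 * Real.pi * v.val * s.val / N)
        = ((Real.sqrt N)⁻¹ : ℝ) • ∑ t : Fin N,
            x t * qexp qJ (2 * Real.pi * v.val * ((s.val : ℝ) - t.val) / N) := by
    intro v
    rw [dqft1, smul_mul_assoc, Finset.sum_mul]
    congr 1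
    apply Finset.sum_congr rfl
    intro t _
    show x t * qexp qJ (-(2 * Real.pi * v.val * t.val / N)) *
      qexp qJ (2 * Real.pi * v.val * s.val / N) = _
    rw [mul_assoc, qexp_mul]
    congr 2
    field_simp
    ring
  symm
  simp only [hterm]
  rw [← Finset.smul_sum, smul_smul, ← mul_inv, hsq]
  rw [Finset.sum_comm]
  have hrow : ∀ t : Fin N,
      ∑ v : Fin N, x t * qexp qJ (2 * Real.pi * v.val * ((s.val : ℝ) - t.val) / N)
        = x t * (if s = t then (N : Quaternion ℝ) else 0) := by
    intro t
    rw [← Finset.mul_sum, kernel_sum N hN s t]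
  simp only [hrow, mul_ite, mul_zero]
  rw [Finset.sum_ite_eq Finset.univ s (fun t => x t * (N : Quaternion ℝ))]
  simp only [Finset.mem_univ, if_true]
  have : x s * (N : Quaternion ℝ) = (N : ℝ) • x s := by
    rw [← Quaternion.coe_natCast, Quaternion.mul_coe_eq_smul]
  rw [this, smul_smul, inv_mul_cancel₀ hNR.ne', one_smul]

/-- 1D discrete quaternion uncertainty principle (Donoho–Stark form). -/
theorem dqft1_uncertainty (N : ℕ) (hN : 0 < N)
    (x : Fin N → Quaternion ℝ) (hx : x ≠ 0) :
    N ≤ (Finset.univ.filter (fun s : Fin N => x s ≠ 0)).card *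
          (Finset.univ.filter (fun v : Fin N => dqft1 N x v ≠ 0)).card := by
  classical
  set T := Finset.univ.filter (fun s : Fin N => x s ≠ 0) with hT
  set Ω := Finset.univ.filter (fun v : Fin N => dqft1 N x v ≠ 0) with hΩ
  have hNR : (0:ℝ) < N := by exact_mod_cast hN
  have hsq : Real.sqrt N * Real.sqrt N = N := Real.mul_self_sqrt hNR.le
  have hsqpos : 0 < Real.sqrt N := Real.sqrt_pos.mpr hNR
  obtain ⟨s0, -, hs0⟩ := Finset.exists_max_image Finset.univ (fun s : Fin N => ‖x s‖)
    (Finset.univ_nonempty_iff.mpr ⟨⟨0, hN⟩⟩)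
  set M := ‖x s0‖ with hM
  have hMpos : 0 < M := by
    obtain ⟨s1, hs1⟩ := Function.ne_iff.mp hx
    have h1 : (0:ℝ) < ‖x s1‖ := by
      simpa using norm_pos_iff.mpr (show x s1 ≠ 0 by simpa using hs1)
    exact lt_of_lt_of_le h1 (hs0 s1 (Finset.mem_univ _))
  -- total norm bound
  have hsumT : ∑ s : Fin N, ‖x s‖ ≤ (T.card : ℝ) * M := by
    have he : ∑ s : Fin N, ‖x s‖ = ∑ s ∈ T, ‖x s‖ := by
      symm
      apply Finset.sum_subset (Finset.subset_univ T)
      intro s _ hs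
      simp only [hT, Finset.mem_filter, Finset.mem_univ, true_and, not_not] at hs
      simp [hs]
    rw [he]
    calc ∑ s ∈ T, ‖x s‖ ≤ T.card • M :=
          Finset.sum_le_card_nsmul T _ M (fun s _ => hs0 s (Finset.mem_univ _))
      _ = (T.card : ℝ) * M := by rw [nsmul_eq_mul]
  have hFbound : ∀ v : Fin N, ‖dqft1 N x v‖ ≤ (Real.sqrt N)⁻¹ * ((T.card : ℝ) * M) := by
    intro v
    rw [dqft1, norm_smul, Real.norm_eq_abs, abs_of_nonneg (by positivity)]
    apply mul_le_mul_of_nonneg_left _ (by positivity)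
    calc ‖∑ s : Fin N, x s * qexp qJ (-(2 * Real.pi * v.val * s.val / N))‖
        ≤ ∑ s : Fin N, ‖x s * qexp qJ (-(2 * Real.pi * v.val * s.val / N))‖ :=
          norm_sum_le _ _
      _ = ∑ s : Fin N, ‖x s‖ := by
          apply Finset.sum_congr rfl
          intro s _
          rw [norm_mul, norm_qexp, mul_one]
      _ ≤ (T.card : ℝ) * M := hsumT
  -- inversion bound
  have hMle : M ≤ (Real.sqrt N)⁻¹ *
      ((Ω.card : ℝ) * ((Real.sqrt N)⁻¹ * ((T.card : ℝ) * M))) := by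
    have hinv := inversion N hN x s0
    calc M = ‖x s0‖ := rfl
      _ = ‖((Real.sqrt N)⁻¹ : ℝ) •
            ∑ v : Fin N, dqft1 N x v * qexp qJ (2 * Real.pi * v.val * s0.val / N)‖ := by
          rw [← hinv]
      _ ≤ (Real.sqrt N)⁻¹ * ∑ v : Fin N, ‖dqft1 N x v‖ := by
          rw [norm_smul, Real.norm_eq_abs, abs_of_nonneg (by positivity)]
          apply mul_le_mul_of_nonneg_left _ (by positivity)
          calc ‖∑ v : Fin N, dqft1 N x v * qexp qJ (2 * Real.pi * v.val * s0.val / N)‖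
              ≤ ∑ v : Fin N, ‖dqft1 N x v * qexp qJ (2 * Real.pi * v.val * s0.val / N)‖ :=
                norm_sum_le _ _
            _ = ∑ v : Fin N, ‖dqft1 N x v‖ := by
                apply Finset.sum_congr rfl
                intro v _
                rw [norm_mul, norm_qexp, mul_one]
      _ ≤ (Real.sqrt N)⁻¹ * ((Ω.card : ℝ) * ((Real.sqrt N)⁻¹ * ((T.card : ℝ) * M))) := by
          apply mul_le_mul_of_nonneg_left _ (by positivity)
          have he : ∑ v : Fin N, ‖dqft1 N x v‖ = ∑ v ∈ Ω, ‖dqft1 N x v‖ := by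
            symm
            apply Finset.sum_subset (Finset.subset_univ Ω)
            intro v _ hv
            simp only [hΩ, Finset.mem_filter, Finset.mem_univ, true_and, not_not] at hv
            simp [hv]
          rw [he]
          calc ∑ v ∈ Ω, ‖dqft1 N x v‖
              ≤ Ω.card • ((Real.sqrt N)⁻¹ * ((T.card : ℝ) * M)) :=
                Finset.sum_le_card_nsmul Ω _ _ (fun v _ => hFbound v)
            _ = (Ω.card : ℝ) * ((Real.sqrt N)⁻¹ * ((T.card : ℝ) * M)) := by
                rw [nsmul_eq_mul]
  -- conclude
  have h2 : (Real.sqrt N)⁻¹ * (Real.sqrt N)⁻¹ = (N : ℝ)⁻¹ := by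
    rw [← mul_inv, hsq]
  have hM' : M ≤ (N : ℝ)⁻¹ * ((T.card : ℝ) * (Ω.card : ℝ) * M) := by
    calc M ≤ (Real.sqrt N)⁻¹ *
        ((Ω.card : ℝ) * ((Real.sqrt N)⁻¹ * ((T.card : ℝ) * M))) := hMle
      _ = ((Real.sqrt N)⁻¹ * (Real.sqrt N)⁻¹) * ((T.card : ℝ) * (Ω.card : ℝ) * M) := by
          ring
      _ = (N : ℝ)⁻¹ * ((T.card : ℝ) * (Ω.card : ℝ) * M) := by rw [h2]
  have h3 : (N : ℝ) * M ≤ (T.card : ℝ) * (Ω.card : ℝ) * M := by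
    have := mul_le_mul_of_nonneg_left hM' hNR.le
    rwa [← mul_assoc, mul_inv_cancel₀ hNR.ne', one_mul] at this
  have h4 : (N : ℝ) ≤ (T.card : ℝ) * (Ω.card : ℝ) :=
    le_of_mul_le_mul_right h3 hMpos
  exact_mod_cast h4
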